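/- Let R be a UFD (noetherian integral domain, not a field), T ⊆ R \ {0} a saturated multiplicative subset, and suppose that for every prime element t ∈ T there exists a prime element p ∉ T with (t,p)R a proper ideal of R. Then the induced map of adic completions lim_{s} R/sR → lim_{s} T⁻¹R/sT⁻¹R is injective. -/

import Mathlib

open Ideal

/-- Compatibility condition for a family indexed by the divisibility preorder on `R \ {0}`. -/
def AdicCompat (R A : Type*) [CommRing R] [CommRing A] [Algebra R A]
    (g : ∀ s : R, A ⧸ Ideal.span {algebraMap R A s}) : Prop :=
  ∀ s t : R, s ≠ 0 → t ≠ 0 → ∀ h : s ∣ t,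
    Ideal.Quotient.factor (S := Ideal.span {algebraMap R A t}) (T := Ideal.span {algebraMap R A s})
      (Ideal.span_singleton_le_span_singleton.mpr (map_dvd _ h)) (g t) = g s

/-- The adic completion of the `R`-algebra `A`, indexed by nonzero elements of `R`. -/
def AdicCompl (R A : Type*) [CommRing R] [CommRing A] [Algebra R A] :=
  {g : ∀ s : R, A ⧸ Ideal.span {algebraMap R A s} // AdicCompat R A g}

/-- The canonical (diagonal) map `A → lim_{s ∈ R \ {0}} A/sA`. -/
def adicDiag (R A : Type*) [CommRing R] [CommRing A] [Algebra R A] (a : A) : AdicCompl R A :=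
  ⟨fun _ => Ideal.Quotient.mk _ a, fun _ _ _ _ _ => Ideal.Quotient.factor_mk _ a⟩

/-- The map of adic completions induced by `R → A`. -/
def adicInduced (R A : Type*) [CommRing R] [CommRing A] [Algebra R A] :
    AdicCompl R R → AdicCompl R A := fun f =>
  ⟨fun s => Ideal.quotientMap (I := Ideal.span {algebraMap R R s})
      (Ideal.span {algebraMap R A s}) (algebraMap R A)
      ((Ideal.span_singleton_le_iff_mem _).mpr
        (Ideal.mem_comap.mpr (Ideal.mem_span_singleton_self _))) (f.1 s),
    by
      intro s t hs ht h
      obtain ⟨r, hr⟩ := Ideal.Quotient.mk_surjective (f.1 t)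
      have h2 := f.2 s t hs ht h
      beta_reduce
      rw [← h2, ← hr]
      simp only [Ideal.quotientMap_mk, Ideal.Quotient.factor_mk]⟩

/-!
Given `f, g` with the same image, pick representatives `a s, b s` of their components; the family
`r = a - b` is compatible (`s ∣ t → s ∣ r t - r s`), and equality of the images says that
`s ∣ τ * r s` for some `τ ∈ T`. We must show `s ∣ r s`. By compatibility and coprime factorization
it suffices to treat prime powers `p ^ i`. If `p ∉ T`, then `p` is coprime to every element of the
saturated `T`. If `p ∈ T`, pick a prime `q ∉ T` with `(p, q) ≠ R`: the previous case gives
`q ^ k ∣ r (p ^ i * q ^ k)`, so `r (p ^ i) ∈ (p ^ i) + (q) ^ k` for every `k`, and Krull's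
intersection theorem in `R ⧸ (p ^ i)` yields `j ∈ (q)` with `p ^ i ∣ (1 - j) * r (p ^ i)`.
Since `(p, q) ≠ R`, `p ∤ 1 - j`.
-/
theorem Ideal.exists_one_sub_mul_mem_of_forall_mem_sup_pow {R : Type*} [CommRing R]
    [IsNoetherianRing R] {I J : Ideal R} {x : R} (h : ∀ k : ℕ, x ∈ I ⊔ J ^ k) :
    ∃ j ∈ J, (1 - j) * x ∈ I := by
  have hx : Submodule.Quotient.mk (p := I) x ∈ (⨅ k : ℕ, J ^ k • ⊤ : Submodule R (R ⧸ I)) := by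
    refine Submodule.mem_iInf _ |>.mpr fun k => ?_
    obtain ⟨y, hy, z, hz, rfl⟩ := Submodule.mem_sup.mp (h k)
    have : Submodule.Quotient.mk (p := I) (y + z) = z • Submodule.Quotient.mk 1 := by
      rw [Submodule.Quotient.mk_add, (Submodule.Quotient.mk_eq_zero I).mpr hy, zero_add,
        ← Submodule.Quotient.mk_smul, smul_eq_mul, mul_one]
    exact this ▸ Submodule.smul_mem_smul hz trivial
  obtain ⟨⟨j, hj⟩, hjx⟩ := (J.mem_iInf_smul_pow_eq_bot_iff _).mp hx
  refine ⟨j, hj, ?_⟩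
  rw [← Submodule.Quotient.mk_eq_zero, sub_mul, one_mul, Submodule.Quotient.mk_sub,
    ← smul_eq_mul, Submodule.Quotient.mk_smul, hjx, sub_self]

theorem Submonoid.MulSaturated.mem_of_dvd {M : Type*} [CommMonoid M] {T : Submonoid M}
    (hT : T.MulSaturated) {a b : M} (hab : a ∣ b) (hb : b ∈ T) : a ∈ T := by
  obtain ⟨c, rfl⟩ := hab
  exact (hT hb).1

theorem Prime.pow_dvd_of_dvd_mul_of_notMem {R : Type*} [CommRing R]
    [UniqueFactorizationMonoid R] {T : Submonoid R} (hT : T.MulSaturated)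
    {p τ x : R} (hp : Prime p) (hpT : p ∉ T) (hτ : τ ∈ T) (i : ℕ) (h : p ^ i ∣ τ * x) :
    p ^ i ∣ x :=
  ((hp.irreducible.isRelPrime_iff_not_dvd.mpr fun hpτ => hpT (hT.mem_of_dvd hpτ hτ)).pow_left
    ).dvd_of_dvd_mul_left h

def IsDvdCompatible {R : Type*} [CommRing R] (r : R → R) : Prop :=
  ∀ ⦃s t : R⦄, s ≠ 0 → t ≠ 0 → s ∣ t → s ∣ r t - r s

section IsDvdCompatible

variable {R : Type*} [CommRing R] {r : R → R}

theorem IsDvdCompatible.dvd_apply_mul (hr : IsDvdCompatible r) {s t : R} (ht : s * t ≠ 0)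
    (hs : s ∣ r s) : s ∣ r (s * t) := by
  simpa only [sub_add_cancel] using
    dvd_add (hr (left_ne_zero_of_mul ht) ht (dvd_mul_right s t)) hs

theorem IsDvdCompatible.sub {a b : R → R} (ha : IsDvdCompatible a) (hb : IsDvdCompatible b) :
    IsDvdCompatible (a - b) := fun s t hs ht hst => by
  simpa only [Pi.sub_apply, sub_sub_sub_comm] using dvd_sub (ha hs ht hst) (hb hs ht hst)

variable [UniqueFactorizationMonoid R]

theorem IsDvdCompatible.dvd_apply_of_forall_prime_pow (hr : IsDvdCompatible r)
    (hpow : ∀ (p : R) (i : ℕ), Prime p → p ^ i ∣ r (p ^ i)) (s : R) (hs : s ≠ 0) : s ∣ r s := by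
  induction s using UniqueFactorizationMonoid.induction_on_coprime with
  | h0 => exact absurd rfl hs
  | h1 hu => exact hu.dvd
  | hpr i hp => exact hpow _ i hp
  | @hcp x y hxy hx hy =>
    refine hxy.mul_dvd (hr.dvd_apply_mul hs (hx (left_ne_zero_of_mul hs))) ?_
    rw [mul_comm] at hs ⊢
    exact hr.dvd_apply_mul hs (hy (left_ne_zero_of_mul hs))

variable {T : Submonoid R}

theorem pow_dvd_apply_of_notMem (hT : T.MulSaturated) (hrT : ∀ s : R, ∃ τ ∈ T, s ∣ τ * r s)
    {p : R} (hp : Prime p) (hpT : p ∉ T) (i : ℕ) : p ^ i ∣ r (p ^ i) := by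
  obtain ⟨τ, hτ, h⟩ := hrT (p ^ i)
  exact hp.pow_dvd_of_dvd_mul_of_notMem hT hpT hτ i h

theorem IsDvdCompatible.pow_dvd_apply_of_span_pair_ne_top [IsNoetherianRing R]
    (hr : IsDvdCompatible r) (hT : T.MulSaturated) (hrT : ∀ s : R, ∃ τ ∈ T, s ∣ τ * r s)
    {p q : R} (hp : Prime p) (hq : Prime q) (hqT : q ∉ T) (hpq : Ideal.span {p, q} ≠ ⊤)
    (i : ℕ) : p ^ i ∣ r (p ^ i) := by
  have hpi : p ^ i ≠ 0 := pow_ne_zero i hp.ne_zero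
  have hmem (k : ℕ) : r (p ^ i) ∈ Ideal.span {p ^ i} ⊔ Ideal.span {q} ^ k := by
    obtain ⟨τ, hτ, h⟩ := hrT (p ^ i * q ^ k)
    have hqk : q ^ k ∣ r (p ^ i * q ^ k) :=
      hq.pow_dvd_of_dvd_mul_of_notMem hT hqT hτ k ((dvd_mul_left _ _).trans h)
    have hpik : p ^ i ∣ r (p ^ i * q ^ k) - r (p ^ i) :=
      hr hpi (mul_ne_zero hpi (pow_ne_zero k hq.ne_zero)) (dvd_mul_right _ _)
    rw [Ideal.span_singleton_pow, ← sub_sub_cancel (r (p ^ i * q ^ k)) (r (p ^ i))]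
    exact Ideal.sub_mem _ (Ideal.mem_sup_right (Ideal.mem_span_singleton.mpr hqk))
      (Ideal.mem_sup_left (Ideal.mem_span_singleton.mpr hpik))
  obtain ⟨j, hj, hjr⟩ := Ideal.exists_one_sub_mul_mem_of_forall_mem_sup_pow hmem
  have hpj : ¬ p ∣ 1 - j := fun hpj => hpq <| (Ideal.eq_top_iff_one _).mpr <| by
    rw [← sub_add_cancel 1 j, Ideal.span_insert]
    exact Ideal.add_mem _ (Ideal.mem_sup_left (Ideal.mem_span_singleton.mpr hpj))
      (Ideal.mem_sup_right hj)
  exact (hp.irreducible.isRelPrime_iff_not_dvd.mpr hpj).pow_left.dvd_of_dvd_mul_left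
    (Ideal.mem_span_singleton.mp hjr)

theorem IsDvdCompatible.dvd_apply [IsNoetherianRing R] (hr : IsDvdCompatible r)
    (hT : T.MulSaturated) (hT0 : (0 : R) ∉ T)
    (hprime : ∀ t : R, Prime t → t ∈ T → ∃ p : R, Prime p ∧ p ∉ T ∧ Ideal.span {t, p} ≠ ⊤)
    (hrT : ∀ s : R, ∃ τ ∈ T, s ∣ τ * r s) (s : R) : s ∣ r s := by
  rcases eq_or_ne s 0 with rfl | hs
  · obtain ⟨τ, hτ, h⟩ := hrT 0
    exact zero_dvd_iff.mpr <| (mul_eq_zero.mp (zero_dvd_iff.mp h)).resolve_left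
      (ne_of_mem_of_not_mem hτ hT0)
  refine hr.dvd_apply_of_forall_prime_pow (fun p i hp => ?_) s hs
  by_cases hpT : p ∈ T
  · obtain ⟨q, hq, hqT, hpq⟩ := hprime p hp hpT
    exact hr.pow_dvd_apply_of_span_pair_ne_top hT hrT hp hq hqT hpq i
  · exact pow_dvd_apply_of_notMem hT hrT hp hpT i

end IsDvdCompatible

section AdicCompl

variable {R : Type*} [CommRing R] {a b : R → R} {f g : AdicCompl R R}

theorem AdicCompat.isDvdCompatible {f : ∀ s : R, R ⧸ Ideal.span {algebraMap R R s}}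
    (hf : AdicCompat R R f) (ha : ∀ s, Ideal.Quotient.mk _ (a s) = f s) : IsDvdCompatible a := by
  intro s t hs ht hst
  have h := hf s t hs ht hst
  rw [← ha t, ← ha s, Ideal.Quotient.factor_mk, Ideal.Quotient.eq] at h
  exact Ideal.mem_span_singleton.mp h

theorem AdicCompl.ext_of_dvd_sub (ha : ∀ s, Ideal.Quotient.mk _ (a s) = f.1 s)
    (hb : ∀ s, Ideal.Quotient.mk _ (b s) = g.1 s) (hab : ∀ s, s ∣ a s - b s) : f = g := by
  refine Subtype.ext (funext fun s => ?_)
  rw [← ha, ← hb, Ideal.Quotient.eq]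
  exact Ideal.mem_span_singleton.mpr (hab s)

theorem AdicCompl.exists_mem_dvd_mul_sub_of_adicInduced_eq {M : Submonoid R} {S : Type*}
    [CommRing S] [Algebra R S] [IsLocalization M S]
    (ha : ∀ s, Ideal.Quotient.mk _ (a s) = f.1 s) (hb : ∀ s, Ideal.Quotient.mk _ (b s) = g.1 s)
    (hfg : adicInduced R S f = adicInduced R S g) (s : R) : ∃ τ ∈ M, s ∣ τ * (a s - b s) := by
  have h := congrArg (fun x => x.1 s) hfg
  simp only [adicInduced, ← ha, ← hb, Ideal.quotientMap_mk, Ideal.Quotient.eq, ← map_sub] at h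
  rw [← Set.image_singleton, ← Ideal.map_span,
    IsLocalization.algebraMap_mem_map_algebraMap_iff M] at h
  simpa only [Ideal.mem_span_singleton] using h

end AdicCompl

theorem injective_adicInduced_of_saturated_general
    (R : Type*) [CommRing R] [IsNoetherianRing R] [UniqueFactorizationMonoid R]
    (T : Submonoid R) (hT0 : (0 : R) ∉ T)
    (hsat : ∀ a b : R, a * b ∈ T → a ∈ T ∧ b ∈ T)
    (hprime : ∀ t : R, Prime t → t ∈ T →
      ∃ p : R, Prime p ∧ p ∉ T ∧ Ideal.span {t, p} ≠ ⊤) :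
    Function.Injective (adicInduced R (Localization T)) := by
  intro f g hfg
  choose a ha using fun s => Ideal.Quotient.mk_surjective (f.1 s)
  choose b hb using fun s => Ideal.Quotient.mk_surjective (g.1 s)
  have hab : IsDvdCompatible (a - b) := (f.2.isDvdCompatible ha).sub (g.2.isDvdCompatible hb)
  exact AdicCompl.ext_of_dvd_sub ha hb <| hab.dvd_apply (fun _ _ h => hsat _ _ h) hT0 hprime
    (AdicCompl.exists_mem_dvd_mul_sub_of_adicInduced_eq ha hb hfg)

theorem injective_adicInduced_of_saturated
    (R : Type*) [CommRing R] [IsDomain R] [IsNoetherianRing R] [UniqueFactorizationMonoid R]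
    (hR : ¬ IsField R) (T : Submonoid R) (hT0 : (0 : R) ∉ T)
    (hsat : ∀ a b : R, a * b ∈ T → a ∈ T ∧ b ∈ T)
    (hprime : ∀ t : R, Prime t → t ∈ T →
      ∃ p : R, Prime p ∧ p ∉ T ∧ Ideal.span {t, p} ≠ ⊤) :
    Function.Injective (adicInduced R (Localization T)) :=
  injective_adicInduced_of_saturated_general R T hT0 hsat hprime
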